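/- Let K, p, q be natural numbers and let C, D, α, β be real numbers with C ≥ 1, D ≥ 0 and 1 ≤ α < β. Let a, b : ℕ → ℝ be nonnegative sequences such that a(i) ≤ C·i^p·α^i for all i > K, (1/C)·k^q·β^k ≤ b(k) ≤ C·k^q·β^k for all k > K, b(j) ≤ D for all j ≤ K, and b(k) > 0 for all k. Let x : ℕ → ℕ → ℝ be a nonnegative double sequence satisfying x(i,k) ≤ b(k−i)·a(i) for all 0 ≤ i ≤ k. Then there exists a constant M such that for every k, the sum over i = 0,…,k of i·x(i,k)/b(k) is at most M. -/

import Mathlib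

/-!
For `K < k` the term `i * x i k / b k` is at most `i * b (k - i) * a i / b k`. Extending the
growth bounds of `a` and `b` to all indices (at the cost of a larger constant), this is
`O(i ^ (p + 1) * (α / β) ^ i)` uniformly in `k`: `(k - i + 1) ^ q ≤ k ^ q` is absorbed by the
lower bound `b k ≥ k ^ q * β ^ k / C`, leaving `β ^ (k - i) / β ^ k = β⁻¹ ^ i`. Since `α < β`,
the series `∑ i ^ (p + 1) * (α / β) ^ i` converges, so the sums are bounded for `k > K`, and
there are only finitely many others.
-/

open Filter Finset

theorem exists_nonneg_forall_le_mul_succ_pow_mul_pow {f : ℕ → ℝ} {K q : ℕ} {c γ : ℝ}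
    (hγ : 0 < γ) (hf : ∀ n, K < n → f n ≤ c * (n : ℝ) ^ q * γ ^ n) :
    ∃ c', 0 ≤ c' ∧ ∀ n : ℕ, f n ≤ c' * ((n : ℝ) + 1) ^ q * γ ^ n := by
  have hw : ∀ n : ℕ, 0 < ((n : ℝ) + 1) ^ q * γ ^ n := fun n => by positivity
  have hbdd : BddAbove (Set.range fun n : ℕ => f n / (((n : ℝ) + 1) ^ q * γ ^ n)) := by
    refine (isBoundedUnder_of_eventually_le (a := |c|)
      ((eventually_gt_atTop K).mono fun n hn => ?_)).bddAbove_range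
    rw [div_le_iff₀ (hw n)]
    calc f n ≤ c * ((n : ℝ) ^ q * γ ^ n) := by rw [← mul_assoc]; exact hf n hn
      _ ≤ |c| * (((n : ℝ) + 1) ^ q * γ ^ n) :=
        mul_le_mul (le_abs_self c) (by gcongr; linarith) (by positivity) (abs_nonneg c)
  obtain ⟨M, hM⟩ := hbdd
  refine ⟨max M 0, le_max_right _ _, fun n => ?_⟩
  have hn := (div_le_iff₀ (hw n)).1 (hM ⟨n, rfl⟩)
  calc f n ≤ M * (((n : ℝ) + 1) ^ q * γ ^ n) := hn
    _ ≤ max M 0 * (((n : ℝ) + 1) ^ q * γ ^ n) := by gcongr; exact le_max_left _ _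
    _ = max M 0 * ((n : ℝ) + 1) ^ q * γ ^ n := by ring

theorem div_le_mul_div_pow_of_le_mul_succ_pow {b : ℕ → ℝ} {C cb β : ℝ} {q i k : ℕ}
    (hC : 0 < C) (hβ : 0 < β) (hcb : 0 ≤ cb) (hi : 0 < i) (hik : i ≤ k)
    (hb : ∀ n : ℕ, b n ≤ cb * ((n : ℝ) + 1) ^ q * β ^ n)
    (hbk : 1 / C * (k : ℝ) ^ q * β ^ k ≤ b k) :
    b (k - i) / b k ≤ C * cb / β ^ i := by
  have hk : 0 < k := hi.trans_le hik
  have hbk_pos : 0 < b k := lt_of_lt_of_le (by positivity) hbk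
  have hsucc : ((k - i : ℕ) : ℝ) + 1 ≤ k := by
    rw [← Nat.cast_succ, Nat.cast_le]; omega
  rw [div_le_iff₀ hbk_pos]
  calc b (k - i) ≤ cb * (((k - i : ℕ) : ℝ) + 1) ^ q * β ^ (k - i) := hb _
    _ ≤ cb * (k : ℝ) ^ q * β ^ (k - i) := by gcongr
    _ = C * cb / β ^ i * (1 / C * (k : ℝ) ^ q * β ^ k) := by
      rw [← Nat.sub_add_cancel hik, pow_add, Nat.add_sub_cancel]
      field_simp
    _ ≤ C * cb / β ^ i * b k := by gcongr

theorem mul_le_two_pow_mul_pow_succ_of_le_mul_succ_pow {u ca α : ℝ} {p i : ℕ}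
    (hca : 0 ≤ ca) (hα : 0 ≤ α) (hi : 0 < i) (hu : u ≤ ca * ((i : ℝ) + 1) ^ p * α ^ i) :
    (i : ℝ) * u ≤ 2 ^ p * ca * ((i : ℝ) ^ (p + 1) * α ^ i) := by
  have hsucc : (i : ℝ) + 1 ≤ 2 * i := by
    have : (1 : ℝ) ≤ i := by exact_mod_cast hi
    linarith
  calc (i : ℝ) * u ≤ i * (ca * (2 * (i : ℝ)) ^ p * α ^ i) := by gcongr; exact hu.trans (by gcongr)
    _ = 2 ^ p * ca * ((i : ℝ) ^ (p + 1) * α ^ i) := by ring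

theorem sum_range_mul_div_le_mul_tsum {a b : ℕ → ℝ} {x : ℕ → ℕ → ℝ} {C α β ca cb : ℝ}
    {p q k : ℕ} (hC : 0 < C) (hα : 0 ≤ α) (hαβ : α < β) (hca : 0 ≤ ca) (hcb : 0 ≤ cb)
    (ha_nonneg : ∀ i, 0 ≤ a i) (ha : ∀ i : ℕ, a i ≤ ca * ((i : ℝ) + 1) ^ p * α ^ i)
    (hb : ∀ n : ℕ, b n ≤ cb * ((n : ℝ) + 1) ^ q * β ^ n) (hk : 0 < k)
    (hbk : 1 / C * (k : ℝ) ^ q * β ^ k ≤ b k) (hx : ∀ i, i ≤ k → x i k ≤ b (k - i) * a i) :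
    ∑ i ∈ range (k + 1), (i : ℝ) * x i k / b k
      ≤ C * cb * (2 ^ p * ca) * ∑' n : ℕ, (n : ℝ) ^ (p + 1) * (α / β) ^ n := by
  have hβ : 0 < β := hα.trans_lt hαβ
  have hbk_pos : 0 < b k := lt_of_lt_of_le (by positivity) hbk
  have hr : ‖α / β‖ < 1 := by
    rw [Real.norm_of_nonneg (by positivity), div_lt_one hβ]; exact hαβ
  have hsum := summable_pow_mul_geometric_of_norm_lt_one (p + 1) hr
  have hterm : ∀ i ∈ range (k + 1), (i : ℝ) * x i k / b k
      ≤ C * cb * (2 ^ p * ca) * ((i : ℝ) ^ (p + 1) * (α / β) ^ i) := by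
    intro i hi
    have hik : i ≤ k := Nat.lt_succ_iff.1 (mem_range.1 hi)
    rcases Nat.eq_zero_or_pos i with rfl | hi0
    · simp
    calc (i : ℝ) * x i k / b k ≤ b (k - i) / b k * (i * a i) := by
          rw [div_mul_eq_mul_div, div_le_div_iff_of_pos_right hbk_pos, mul_left_comm]
          gcongr
          exact hx i hik
      _ ≤ C * cb / β ^ i * (2 ^ p * ca * ((i : ℝ) ^ (p + 1) * α ^ i)) := by
          refine mul_le_mul (div_le_mul_div_pow_of_le_mul_succ_pow hC hβ hcb hi0 hik hb hbk)
            (mul_le_two_pow_mul_pow_succ_of_le_mul_succ_pow hca hα hi0 (ha i))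
            (mul_nonneg (Nat.cast_nonneg i) (ha_nonneg i)) (by positivity)
      _ = C * cb * (2 ^ p * ca) * ((i : ℝ) ^ (p + 1) * (α / β) ^ i) := by
          rw [div_pow]; field_simp
  calc ∑ i ∈ range (k + 1), (i : ℝ) * x i k / b k
      ≤ ∑ i ∈ range (k + 1), C * cb * (2 ^ p * ca) * ((i : ℝ) ^ (p + 1) * (α / β) ^ i) :=
        sum_le_sum hterm
    _ = C * cb * (2 ^ p * ca) * ∑ i ∈ range (k + 1), (i : ℝ) ^ (p + 1) * (α / β) ^ i :=
        (mul_sum _ _ _).symm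
    _ ≤ C * cb * (2 ^ p * ca) * ∑' n : ℕ, (n : ℝ) ^ (p + 1) * (α / β) ^ n := by
        gcongr
        exact hsum.sum_le_tsum _ fun n _ => by positivity

theorem bounded_expected_penetration_distance_core_general
    (K p q : ℕ) (C α β : ℝ) (hC : 1 ≤ C) (hα : 1 ≤ α) (hαβ : α < β)
    (a b : ℕ → ℝ)
    (ha_nonneg : ∀ i, 0 ≤ a i)
    (ha : ∀ i, K < i → a i ≤ C * (i : ℝ) ^ p * α ^ i)
    (hb_lower : ∀ k, K < k → (1 / C) * (k : ℝ) ^ q * β ^ k ≤ b k)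
    (hb_upper : ∀ k, K < k → b k ≤ C * (k : ℝ) ^ q * β ^ k)
    (x : ℕ → ℕ → ℝ)
    (hx : ∀ i k, i ≤ k → x i k ≤ b (k - i) * a i) :
    ∃ M : ℝ, ∀ k, ∑ i ∈ Finset.range (k + 1), (i : ℝ) * x i k / b k ≤ M := by
  have hα0 : 0 < α := by linarith
  obtain ⟨ca, hca, ha'⟩ := exists_nonneg_forall_le_mul_succ_pow_mul_pow hα0 ha
  obtain ⟨cb, hcb, hb'⟩ := exists_nonneg_forall_le_mul_succ_pow_mul_pow (hα0.trans hαβ) hb_upper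
  have hbdd : BddAbove (Set.range fun k => ∑ i ∈ range (k + 1), (i : ℝ) * x i k / b k) :=
    (isBoundedUnder_of_eventually_le ((eventually_gt_atTop K).mono fun k hk =>
      sum_range_mul_div_le_mul_tsum (by linarith) hα0.le hαβ hca hcb ha_nonneg ha' hb'
        (by omega) (hb_lower k hk) fun i hi => hx i k hi)).bddAbove_range
  obtain ⟨M, hM⟩ := hbdd
  exact ⟨M, fun k => hM ⟨k, rfl⟩⟩

/-- Combinatorial core of the bounded expected penetration distance theorem:
if `a` grows at most like `i^p * α^i`, `b` grows like `k^q * β^k` with `1 ≤ α < β`,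
the finitely many initial values of `b` are bounded by `D`, `b` is positive, and
`x i k ≤ b (k - i) * a i`, then `∑_{i=0}^{k} i * x i k / b k` is uniformly bounded. -/
theorem bounded_expected_penetration_distance_core
    (K p q : ℕ) (C D α β : ℝ) (hC : 1 ≤ C) (hD : 0 ≤ D) (hα : 1 ≤ α) (hαβ : α < β)
    (a b : ℕ → ℝ)
    (ha_nonneg : ∀ i, 0 ≤ a i) (hb_nonneg : ∀ k, 0 ≤ b k)
    (ha : ∀ i, K < i → a i ≤ C * (i : ℝ) ^ p * α ^ i)
    (hb_lower : ∀ k, K < k → (1 / C) * (k : ℝ) ^ q * β ^ k ≤ b k)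
    (hb_upper : ∀ k, K < k → b k ≤ C * (k : ℝ) ^ q * β ^ k)
    (hb_init : ∀ j, j ≤ K → b j ≤ D)
    (hb_pos : ∀ k, 0 < b k)
    (x : ℕ → ℕ → ℝ)
    (hx_nonneg : ∀ i k, 0 ≤ x i k)
    (hx : ∀ i k, i ≤ k → x i k ≤ b (k - i) * a i) :
    ∃ M : ℝ, ∀ k, ∑ i ∈ Finset.range (k + 1), (i : ℝ) * x i k / b k ≤ M :=
  bounded_expected_penetration_distance_core_general K p q C α β hC hα hαβ a b ha_nonneg ha hb_lower
    hb_upper x hx
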